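/- arXiv:1804.08810 — 3 statements merged into one kernel-verified Lean document; each statement's English description precedes it below -/
import Mathlib

section
/- For every constant c0 > 0 there is an N_0 such that for all even N ≥ N_0 the following holds. Let 1/10 < α ≤ 1/2 be such that d = ⌈N^α⌉ divides N, and let t ≤ N^{c0}. Let g ∈ G[X] be the Raz–Yehudayoff polynomial on X = {x_1,…,x_N}. Suppose g = f_1 + ⋯ + f_m where each f_i is computed over G by an α-sparse ROABP of width at most s and sparsity t, with s < 2^{N^{9/40}/log N}. Then m ≥ 2^{N^{1/11}}. -/
open MvPolynomial

noncomputable section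

/-- A multilinear polynomial: every exponent is at most 1. -/
def MLin {σ : Type*} {K : Type*} [CommSemiring K] (f : MvPolynomial σ K) : Prop :=
  ∀ d ∈ f.support, ∀ i, d i ≤ 1

/-- The partial derivative matrix of a multilinear polynomial over Y ∪ Z
(Y = `inl`-variables, Z = `inr`-variables), rows and columns indexed by subsets. -/
def pdm {h : ℕ} {K : Type*} [CommSemiring K] (f : MvPolynomial (Fin h ⊕ Fin h) K) :
    Matrix (Finset (Fin h)) (Finset (Fin h)) K := fun S T =>
  f.coeff ((∑ i ∈ S, Finsupp.single (Sum.inl i) 1) + ∑ j ∈ T, Finsupp.single (Sum.inr j) 1)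

/-- The field G = F(W), the field of rational functions over F in variables
`w_{i,k,j}`, `i,k,j ∈ ℕ`. -/
abbrev Gf (F : Type*) [Field F] : Type _ := FractionRing (MvPolynomial (ℕ × ℕ × ℕ) F)

/-- The element w_{i,k,j} of G. -/
def wv (F : Type*) [Field F] (i k j : ℕ) : Gf F :=
  algebraMap (MvPolynomial (ℕ × ℕ × ℕ) F) (Gf F) (MvPolynomial.X (i, k, j))

/-- The Raz–Yehudayoff polynomials `g_{i,j}` (first argument is fuel; every
recursive call reduces `j - i` by at least 2, so fuel `N` suffices for `g_{1,N}`). -/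
def RY (F : Type*) [Field F] : ℕ → ℕ → ℕ → MvPolynomial ℕ (Gf F)
  | 0, _, _ => 1
  | fuel + 1, i, j =>
      if j < i then 1
      else (1 + X i * X j) * RY F fuel (i + 1) (j - 1)
        + ∑ k ∈ (Finset.Icc (i + 1) (j - 2)).filter (fun k => (k - i) % 2 = 1),
            C (wv F i k j) * RY F fuel i k * RY F fuel (k + 1) j

/-- The Raz–Yehudayoff polynomial `g = g_{1,N}`, in the variables `x_1, …, x_N`. -/
def razPoly (F : Type*) [Field F] (N : ℕ) : MvPolynomial ℕ (Gf F) := RY F N 1 N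

/-- `|φ(S) ∩ Y|` for a partition function φ. -/
def yCount {h : ℕ} (φ : ℕ → Fin h ⊕ Fin h) (S : Finset ℕ) : ℕ :=
  (S.filter fun x => (φ x).isLeft = true).card

/-- `|φ(S) ∩ Z|` for a partition function φ. -/
def zCount {h : ℕ} (φ : ℕ → Fin h ⊕ Fin h) (S : Finset ℕ) : ℕ :=
  (S.filter fun x => (φ x).isRight = true).card

/-- `S` is `k`-unbalanced with respect to the partition φ. -/
def kUnb {h : ℕ} (φ : ℕ → Fin h ⊕ Fin h) (k : ℕ) (S : Finset ℕ) : Prop :=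
  (k : ℤ) ≤ |(yCount φ S : ℤ) - (zCount φ S : ℤ)|

/-- Extension of a partition given on `X` to all of ℕ (junk value elsewhere). -/
def extPart {h : ℕ} (hh : 0 < h) (X : Finset ℕ) (e : {x // x ∈ X} → Fin h ⊕ Fin h) :
    ℕ → Fin h ⊕ Fin h := fun x =>
  if hx : x ∈ X then e ⟨x, hx⟩ else Sum.inl ⟨0, hh⟩

/-- Probability of an event under the uniform distribution on a finite type. -/
def unifProb {Ω : Type*} [Fintype Ω] (p : Ω → Prop) : ℝ :=
  haveI := Classical.decPred p
  ((Finset.univ.filter p).card : ℝ) / (Fintype.card Ω : ℝ)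

/-- The (1,1) entry of the product `M 0 * M 1 * ⋯ * M (n-1)`. -/
def mprodVal {K : Type*} [CommSemiring K] {n w : ℕ} (hw : 0 < w)
    (M : Fin n → Matrix (Fin w) (Fin w) (MvPolynomial ℕ K)) : MvPolynomial ℕ K :=
  (List.ofFn M).prod ⟨0, hw⟩ ⟨0, hw⟩

/-- An oblivious read-once ABP of width `w` in variables `x_1, …, x_N` with
variable order π (a permutation of `{1, …, N}`): the ℓ-th layer matrix has
entries of degree at most 1 in the single variable `x_{π(ℓ)}`. -/
def IsROABP {K : Type*} [CommSemiring K] (N w : ℕ) (π : ℕ → ℕ)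
    (M : Fin N → Matrix (Fin w) (Fin w) (MvPolynomial ℕ K)) : Prop :=
  Set.BijOn π (Set.Icc 1 N) (Set.Icc 1 N) ∧
    ∀ ℓ : Fin N, ∀ i j, ∃ a b : K, M ℓ i j = C a + C b * X (π (ℓ.val + 1))

/-- An `r`-pass syntactically multilinear ABP of width `w`. -/
def IsRPass {K : Type*} [CommSemiring K] (N w r : ℕ) (π : Fin r → ℕ → ℕ)
    (M : Fin (r * N) → Matrix (Fin w) (Fin w) (MvPolynomial ℕ K)) : Prop :=
  (∀ j, Set.BijOn (π j) (Set.Icc 1 N) (Set.Icc 1 N)) ∧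
  (∀ ℓ : Fin (r * N), ∀ i j, ∃ a b : K,
      M ℓ i j = C a + C b *
        X (π ⟨ℓ.val / N, Nat.div_lt_of_lt_mul (by rw [Nat.mul_comm N r]; exact ℓ.2)⟩
            (ℓ.val % N + 1))) ∧
  (∀ (idx : Fin (r * N + 1) → Fin w) (v : ℕ) (ℓ₁ ℓ₂ : Fin (r * N)),
      v ∈ (M ℓ₁ (idx ℓ₁.castSucc) (idx ℓ₁.succ)).vars →
      v ∈ (M ℓ₂ (idx ℓ₂.castSucc) (idx ℓ₂.succ)).vars → ℓ₁ = ℓ₂)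

/-- An α-sparse ROABP with variable blocks `Xs 0, …, Xs (d-1)`, width `w` and
sparsity `t`: every entry of the `i`-th matrix is a multilinear polynomial in the
variables `Xs i` with at most `t` monomials. -/
def IsSparseROABP {K : Type*} [CommSemiring K] {d : ℕ} (w t : ℕ)
    (Xs : Fin d → Finset ℕ) (M : Fin d → Matrix (Fin w) (Fin w) (MvPolynomial ℕ K)) : Prop :=
  ∀ ℓ i j, MLin (M ℓ i j) ∧ (M ℓ i j).vars ⊆ Xs ℓ ∧ (M ℓ i j).support.card ≤ t


/-!
Counting monomials suffices. Lifting the coefficients of `g` from `F(W)` to `F[W]` and then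
setting every weight `w_{i,k,j}` to `0` turns `g` into `∏_{r < N/2} (1 + x_{1+r} x_{N-r})`, which
has `2^{N/2}` monomials; specialising coefficients cannot create monomials, so `g` has at least
`2^{N/2}` of them. An entry of a product of `d` matrices of width `s` whose entries have at most
`t` monomials has at most `(s t)^d` monomials, so `2^{N/2} ≤ m (s t)^d`. Finally
`d ≤ N^{1/2} + 1`, `log₂ s ≤ N^{9/40} / log₂ N` and `log₂ t ≤ c₀ log₂ N`, so `d log₂ (s t)` is
`O(N^{29/40})`, which is at most `N/2 - N^{1/11}` for large `N`.
-/

open Finset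

namespace MvPolynomial

variable {σ R : Type*} [CommSemiring R]

theorem card_support_mul_le (p q : MvPolynomial σ R) :
    #(p * q).support ≤ #p.support * #q.support := by
  classical
  exact (card_le_card (support_mul p q)).trans card_add_le

theorem card_support_sum_le {ι : Type*} (s : Finset ι) (f : ι → MvPolynomial σ R) :
    #(∑ i ∈ s, f i).support ≤ ∑ i ∈ s, #(f i).support := by
  classical
  exact (card_le_card support_sum).trans card_biUnion_le

theorem card_support_one_le : #(1 : MvPolynomial σ R).support ≤ 1 :=
  (card_le_card support_monomial_subset).trans (card_singleton _).le

theorem vars_one_add_X_mul_X_subset [Nontrivial R] [DecidableEq σ] (a b : σ) :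
    (1 + X a * X b : MvPolynomial σ R).vars ⊆ {a, b} := by
  refine (vars_add_subset _ _).trans ?_
  rw [vars_one, empty_union]
  exact (vars_mul _ _).trans (by rw [vars_X, vars_X]; rfl)

-- The monomials of `p * X a * X b` are those of `p` shifted by `a + b`, so they contain `a`
-- and are disjoint from those of `p`.
theorem card_support_mul_one_add_X_mul_X {p : MvPolynomial σ R} {a b : σ} (hab : a ≠ b)
    (ha : a ∉ p.vars) : #(p * (1 + X a * X b)).support = 2 * #p.support := by
  classical
  have hshift : (p * X a * X b).support
      = (p.support.map (addRightEmbedding (Finsupp.single a 1))).map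
          (addRightEmbedding (Finsupp.single b 1)) := by
    rw [support_mul_X, support_mul_X]
  have hdisj : Disjoint p.support (p * X a * X b).support := by
    rw [hshift, disjoint_left]
    simp only [mem_map, addRightEmbedding_apply]
    rintro _ hm ⟨_, ⟨m, -, rfl⟩, rfl⟩
    refine ha ((mem_vars_iff_mem_support a).2 ⟨_, hm, ?_⟩)
    simp [hab.symm]
  have hadd : (p + p * X a * X b).support = p.support ∪ (p * X a * X b).support :=
    Finsupp.support_add_eq hdisj
  rw [show p * (1 + X a * X b) = p + p * X a * X b by ring, hadd, card_union_of_disjoint hdisj,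
    hshift, card_map, card_map, two_mul]

theorem card_support_prod_one_add_X_mul_X [Nontrivial R] {ι : Type*} (s : Finset ι)
    (a b : ι → σ) (ha : Set.InjOn a s) (hab : ∀ r ∈ s, ∀ r' ∈ s, a r ≠ b r') :
    #(∏ r ∈ s, (1 + X (a r) * X (b r) : MvPolynomial σ R)).support = 2 ^ #s := by
  classical
  induction s using Finset.induction_on with
  | empty => simp [support_one]
  | insert r s hr ih =>
    have hfresh : a r ∉ (∏ r' ∈ s, (1 + X (a r') * X (b r') : MvPolynomial σ R)).vars := by
      intro hmem
      obtain ⟨r', hr', hmem'⟩ := mem_biUnion.1 ((vars_prod _).trans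
        (biUnion_mono fun _ _ => vars_one_add_X_mul_X_subset _ _) hmem)
      rcases mem_insert.1 hmem' with h | h
      · exact hr (ha (mem_insert_self r s) (mem_insert_of_mem hr') h ▸ hr')
      · exact hab r (mem_insert_self r s) r' (mem_insert_of_mem hr') (mem_singleton.1 h)
    rw [prod_insert hr, mul_comm, card_support_mul_one_add_X_mul_X
      (hab r (mem_insert_self r s) r (mem_insert_self r s)) hfresh,
      ih (ha.mono (coe_subset.2 (subset_insert r s)))
        (fun r hr r' hr' => hab r (mem_insert_of_mem hr) r' (mem_insert_of_mem hr')),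
      card_insert_of_notMem hr, pow_succ, mul_comm]

end MvPolynomial

theorem Matrix.card_support_list_prod_apply_le {n σ R : Type*} [Fintype n] [DecidableEq n]
    [CommSemiring R] {t : ℕ} (L : List (Matrix n n (MvPolynomial σ R)))
    (hL : ∀ A ∈ L, ∀ i j, #(A i j).support ≤ t) (i j : n) :
    #(L.prod i j).support ≤ (Fintype.card n * t) ^ L.length := by
  induction L generalizing i with
  | nil =>
    rw [List.prod_nil, List.length_nil, pow_zero, Matrix.one_apply]
    split_ifs
    · exact MvPolynomial.card_support_one_le
    · simp
  | cons A L ih =>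
    calc #((A :: L).prod i j).support
        ≤ ∑ k, #(A i k * L.prod k j).support := by
          rw [List.prod_cons, Matrix.mul_apply]
          exact MvPolynomial.card_support_sum_le _ _
      _ ≤ ∑ _k : n, t * (Fintype.card n * t) ^ L.length :=
          Finset.sum_le_sum fun k _ => (MvPolynomial.card_support_mul_le _ _).trans
            (Nat.mul_le_mul (hL A List.mem_cons_self i k)
              (ih (fun B hB => hL B (List.mem_cons_of_mem A hB)) k))
      _ = (Fintype.card n * t) ^ (A :: L).length := by
          rw [Finset.sum_const, Finset.card_univ, smul_eq_mul, List.length_cons, pow_succ]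
          ring

theorem card_support_mprodVal_le {K : Type*} [CommSemiring K] {n w t : ℕ} (hw : 0 < w)
    (M : Fin n → Matrix (Fin w) (Fin w) (MvPolynomial ℕ K))
    (hM : ∀ ℓ i j, #(M ℓ i j).support ≤ t) : #(mprodVal hw M).support ≤ (w * t) ^ n := by
  simpa [mprodVal] using Matrix.card_support_list_prod_apply_le (List.ofFn M)
    (by simpa [List.mem_ofFn] using hM) ⟨0, hw⟩ ⟨0, hw⟩

theorem card_support_sum_mprodVal_le {K : Type*} [CommSemiring K] {m d s t : ℕ} {sw : Fin m → ℕ}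
    (hsw : ∀ i, 0 < sw i) (hsws : ∀ i, sw i ≤ s)
    (M : (i : Fin m) → Fin d → Matrix (Fin (sw i)) (Fin (sw i)) (MvPolynomial ℕ K))
    (hM : ∀ i ℓ j k, #(M i ℓ j k).support ≤ t) :
    #(∑ i, mprodVal (hsw i) (M i)).support ≤ m * (s * t) ^ d := calc
  #(∑ i, mprodVal (hsw i) (M i)).support ≤ ∑ i, #(mprodVal (hsw i) (M i)).support :=
    MvPolynomial.card_support_sum_le _ _
  _ ≤ ∑ _i : Fin m, (s * t) ^ d := sum_le_sum fun i _ =>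
    (card_support_mprodVal_le _ _ (hM i)).trans (by gcongr; exact hsws i)
  _ = m * (s * t) ^ d := by simp

-- Weights in an arbitrary ring, so that `g` can be lifted to `F[W]` and its weights
-- specialised to `0`, an evaluation that does not exist on `F(W)`.
def ryWith {R : Type*} [CommSemiring R] (w : ℕ → ℕ → ℕ → R) : ℕ → ℕ → ℕ → MvPolynomial ℕ R
  | 0, _, _ => 1
  | fuel + 1, i, j =>
      if j < i then 1
      else (1 + X i * X j) * ryWith w fuel (i + 1) (j - 1)
        + ∑ k ∈ (Finset.Icc (i + 1) (j - 2)).filter (fun k => (k - i) % 2 = 1),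
            C (w i k j) * ryWith w fuel i k * ryWith w fuel (k + 1) j

section ryWith

variable {R S : Type*} [CommSemiring R] [CommSemiring S]

theorem RY_eq_ryWith (F : Type*) [Field F] (fuel i j : ℕ) :
    RY F fuel i j = ryWith (wv F) fuel i j := by
  induction fuel generalizing i j with
  | zero => rfl
  | succ fuel ih => simp only [RY, ryWith, ih]

theorem map_ryWith (φ : R →+* S) (w : ℕ → ℕ → ℕ → R) (fuel i j : ℕ) :
    map φ (ryWith w fuel i j) = ryWith (fun i k j => φ (w i k j)) fuel i j := by
  induction fuel generalizing i j with
  | zero => simp [ryWith]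
  | succ fuel ih =>
    rw [ryWith, ryWith]
    split_ifs
    · exact map_one _
    · simp only [map_add, map_mul, map_one, map_sum, map_X, map_C, ih]

theorem ryWith_of_lt (w : ℕ → ℕ → ℕ → R) (fuel : ℕ) {i j : ℕ} (h : j < i) :
    ryWith w fuel i j = 1 := by
  cases fuel <;> simp [ryWith, h]

theorem ryWith_eq_prod {w : ℕ → ℕ → ℕ → R} (hw : ∀ i k j, w i k j = 0) {fuel i j : ℕ}
    (hij : i ≤ j + 1) (heven : Even (j + 1 - i)) (hfuel : (j + 1 - i) / 2 ≤ fuel) :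
    ryWith w fuel i j = ∏ r ∈ Finset.range ((j + 1 - i) / 2), (1 + X (i + r) * X (j - r)) := by
  induction fuel generalizing i j with
  | zero =>
    rw [show (j + 1 - i) / 2 = 0 by omega, Finset.prod_range_zero, ryWith]
  | succ fuel ih =>
    by_cases hji : j < i
    · rw [ryWith_of_lt w _ hji, show (j + 1 - i) / 2 = 0 by omega, Finset.prod_range_zero]
    obtain ⟨n, hn⟩ := heven
    rw [ryWith, if_neg hji, ih (by omega) ⟨n - 1, by omega⟩ (by omega),
      show (j + 1 - i) / 2 = (j - 1 + 1 - (i + 1)) / 2 + 1 by omega, Finset.prod_range_succ']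
    simp only [hw, C_0, zero_mul, Finset.sum_const_zero, add_zero]
    rw [mul_comm]
    congr 1
    refine Finset.prod_congr rfl fun r _ => ?_
    rw [show i + 1 + r = i + (r + 1) by omega, show j - 1 - r = j - (r + 1) by omega]

end ryWith

theorem two_pow_le_card_support_razPoly (F : Type*) [Field F] {N : ℕ} (hN : Even N) :
    2 ^ (N / 2) ≤ #(razPoly F N).support := by
  set P := ryWith (fun i k j => (X (i, k, j) : MvPolynomial (ℕ × ℕ × ℕ) F)) N 1 N
  have hP : razPoly F N = map (algebraMap _ (Gf F)) P := by
    rw [razPoly, RY_eq_ryWith, map_ryWith]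
    rfl
  have hP₀ : map constantCoeff P
      = ∏ r ∈ Finset.range (N / 2), (1 + X (1 + r) * X (N - r) : MvPolynomial ℕ F) := by
    rw [map_ryWith, ryWith_eq_prod (fuel := N) (i := 1) (j := N) (fun _ _ _ => by simp)
      (by omega) (by simpa using hN) (by omega), Nat.add_sub_cancel]
  have hcard : #(map constantCoeff P).support = 2 ^ (N / 2) := by
    rw [hP₀, card_support_prod_one_add_X_mul_X _ _ _
      (fun r _ r' _ h => by simpa using h) (fun r hr r' hr' => by simp at hr hr'; omega),
      Finset.card_range]
  rw [hP, support_map_of_injective _ (IsFractionRing.injective _ _), ← hcard]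
  exact card_le_card (support_map_subset _ _)

open Real Filter in
-- All terms are `O(x ^ (29/40))` by `log x ≤ (40/9) x ^ (9/40)`, and `x ^ (29/40) = o(x)`.
theorem eventually_exponent_le_half {c : ℝ} (hc : 0 ≤ c) :
    ∀ᶠ x : ℝ in atTop, ∀ D : ℝ, 0 ≤ D → D ≤ x ^ (1 / 2 : ℝ) + 1 →
      x ^ (1 / 11 : ℝ) + D * (x ^ (9 / 40 : ℝ) / logb 2 x + c * logb 2 x) ≤ x / 2 := by
  set K : ℝ := 40 / (9 * log 2)
  have hlog2 : 0 < log 2 := log_pos one_lt_two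
  filter_upwards [eventually_ge_atTop 2, (tendsto_rpow_atTop (by norm_num : (0 : ℝ) < 11 / 40)
    ).eventually_ge_atTop (2 * (3 + 2 * c * K))] with x hx hbig D hD0 hD
  have hx0 : 0 < x := by linarith
  have hlogb : 1 ≤ logb 2 x := by
    rw [le_logb_iff_rpow_le one_lt_two hx0, rpow_one]
    exact hx
  have hE : x ^ (9 / 40 : ℝ) / logb 2 x ≤ x ^ (9 / 40 : ℝ) :=
    div_le_self (by positivity) hlogb
  have hL : logb 2 x ≤ K * x ^ (9 / 40 : ℝ) := by
    have := log_le_rpow_div hx0.le (by norm_num : (0 : ℝ) < 9 / 40)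
    rw [logb, div_le_iff₀ hlog2]
    calc log x ≤ x ^ (9 / 40 : ℝ) / (9 / 40) := this
      _ = K * x ^ (9 / 40 : ℝ) * log 2 := by simp only [K]; field_simp
  have hD' : D ≤ 2 * x ^ (1 / 2 : ℝ) := by
    linarith [one_le_rpow (by linarith : (1 : ℝ) ≤ x) (by norm_num : (0 : ℝ) ≤ 1 / 2)]
  have h11 : x ^ (1 / 11 : ℝ) ≤ x ^ (29 / 40 : ℝ) :=
    rpow_le_rpow_of_exponent_le (by linarith) (by norm_num)
  have hmul : x ^ (1 / 2 : ℝ) * x ^ (9 / 40 : ℝ) = x ^ (29 / 40 : ℝ) := by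
    rw [← rpow_add hx0]; norm_num
  have hsplit : x ^ (11 / 40 : ℝ) * x ^ (29 / 40 : ℝ) = x := by
    rw [← rpow_add hx0]; norm_num
  have h29 : 0 ≤ x ^ (29 / 40 : ℝ) := by positivity
  calc x ^ (1 / 11 : ℝ) + D * (x ^ (9 / 40 : ℝ) / logb 2 x + c * logb 2 x)
      ≤ x ^ (29 / 40 : ℝ) + 2 * x ^ (1 / 2 : ℝ) * ((1 + c * K) * x ^ (9 / 40 : ℝ)) := by
        refine add_le_add h11 (mul_le_mul hD' ?_ (by positivity) (by positivity))
        nlinarith [mul_le_mul_of_nonneg_left hL hc]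
    _ = (3 + 2 * c * K) * x ^ (29 / 40 : ℝ) := by
        rw [← hmul]; ring
    _ ≤ x / 2 := by nlinarith

open Real Filter in
theorem eventually_mul_pow_ceil_rpow_le {c : ℝ} (hc : 0 ≤ c) :
    ∀ᶠ N : ℕ in atTop, ∀ α ≤ (1 / 2 : ℝ), ∀ s t : ℕ, (t : ℝ) ≤ (N : ℝ) ^ c →
      (s : ℝ) < 2 ^ ((N : ℝ) ^ (9 / 40 : ℝ) / logb 2 N) →
      ((s : ℝ) * t) ^ ⌈(N : ℝ) ^ α⌉₊ ≤ 2 ^ ((N : ℝ) / 2 - N ^ (1 / 11 : ℝ)) := by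
  filter_upwards [tendsto_natCast_atTop_atTop.eventually
    ((eventually_exponent_le_half hc).and (eventually_ge_atTop 1))]
    with N ⟨hexp, hN1⟩ α hα s t ht hs
  set d := ⌈(N : ℝ) ^ α⌉₊
  have hd : (d : ℝ) ≤ (N : ℝ) ^ (1 / 2 : ℝ) + 1 := by
    linarith [Nat.ceil_lt_add_one (rpow_nonneg (Nat.cast_nonneg N) α),
      rpow_le_rpow_of_exponent_le hN1 hα]
  have hst : (s : ℝ) * t ≤ 2 ^ ((N : ℝ) ^ (9 / 40 : ℝ) / logb 2 N + c * logb 2 N) := by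
    rw [rpow_add two_pos, mul_comm c, rpow_mul zero_le_two, rpow_logb two_pos
      one_lt_two.ne' (by linarith)]
    exact mul_le_mul hs.le ht (Nat.cast_nonneg t) (by positivity)
  calc ((s : ℝ) * t) ^ d ≤ (2 ^ ((N : ℝ) ^ (9 / 40 : ℝ) / logb 2 N + c * logb 2 N)) ^ d :=
      pow_le_pow_left₀ (by positivity) hst d
    _ = 2 ^ (d * ((N : ℝ) ^ (9 / 40 : ℝ) / logb 2 N + c * logb 2 N)) := by
      rw [← rpow_natCast, ← rpow_mul zero_le_two, mul_comm]
    _ ≤ 2 ^ ((N : ℝ) / 2 - N ^ (1 / 11 : ℝ)) :=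
      rpow_le_rpow_of_exponent_le one_le_two (by linarith [hexp d (Nat.cast_nonneg d) hd])

open Real Filter in
/-- Theorem (sum of α-sparse ROABPs lower bound). -/
theorem sum_of_sparse_roabp_lower_bound (c₀ : ℝ) (hc₀ : 0 < c₀) :
    ∃ N₀ : ℕ, ∀ (F : Type) [Field F] (N : ℕ), N₀ ≤ N → Even N →
      ∀ (α : ℝ), 1/10 < α → α ≤ 1/2 →
      ∀ (d : ℕ), d = ⌈(N : ℝ) ^ α⌉₊ → d ∣ N →
      ∀ (t s : ℕ), (t : ℝ) ≤ (N : ℝ) ^ c₀ →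
        (s : ℝ) < 2 ^ ((N : ℝ) ^ ((9 : ℝ)/40) / Real.logb 2 N) →
      ∀ (m : ℕ) (sw : Fin m → ℕ) (hsw : ∀ i, 1 ≤ sw i), (∀ i, sw i ≤ s) →
      ∀ (Xs : Fin m → Fin d → Finset ℕ)
        (M : (i : Fin m) → Fin d → Matrix (Fin (sw i)) (Fin (sw i)) (MvPolynomial ℕ (Gf F))),
        (∀ i, ∀ j j' : Fin d, j ≠ j' → Disjoint (Xs i j) (Xs i j')) →
        (∀ i, Finset.univ.biUnion (Xs i) = Finset.Icc 1 N) →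
        (∀ i j, (Xs i j).card = N / d) →
        (∀ i, IsSparseROABP (sw i) t (Xs i) (M i)) →
        razPoly F N = ∑ i : Fin m, mprodVal (show 0 < sw i from hsw i) (M i) →
        (2 : ℝ) ^ ((N : ℝ) ^ ((1 : ℝ)/11)) ≤ (m : ℝ) := by
  obtain ⟨N₀, hN₀⟩ := eventually_atTop.1 (eventually_mul_pow_ceil_rpow_le hc₀.le)
  refine ⟨N₀, fun F _ N hN hNeven α _ hα d hd _ t s ht hs m sw hsw hsws Xs M _ _ _ hM hg => ?_⟩
  have hcount : 2 ^ (N / 2) ≤ m * (s * t) ^ d :=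
    (two_pow_le_card_support_razPoly F hNeven).trans
      (hg ▸ card_support_sum_mprodVal_le hsw hsws M fun i ℓ j k => (hM i ℓ j k).2.2)
  have hpow : ((s : ℝ) * t) ^ d ≤ 2 ^ ((N : ℝ) / 2 - N ^ (1 / 11 : ℝ)) :=
    hd ▸ hN₀ N hN α hα s t ht hs
  have hhalf : ((2 ^ (N / 2) : ℕ) : ℝ) = 2 ^ ((N : ℝ) / 2) := by
    rw [Nat.cast_pow, ← rpow_natCast, Nat.cast_div hNeven.two_dvd two_ne_zero]
    norm_num
  refine le_of_mul_le_mul_right ?_ (by positivity : (0 : ℝ) < 2 ^ ((N : ℝ) / 2 - N ^ (1 / 11 : ℝ)))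
  calc (2 : ℝ) ^ ((N : ℝ) ^ (1 / 11 : ℝ)) * 2 ^ ((N : ℝ) / 2 - N ^ (1 / 11 : ℝ))
      = ((2 ^ (N / 2) : ℕ) : ℝ) := by rw [hhalf, ← rpow_add two_pos]; ring_nf
    _ ≤ m * ((s : ℝ) * t) ^ d := by exact_mod_cast hcount
    _ ≤ m * 2 ^ ((N : ℝ) / 2 - N ^ (1 / 11 : ℝ)) := by gcongr

end
end

section
/- Let K be a field and let f, g ∈ K[Y ∪ Z] be multilinear polynomials such that no variable occurs in both f and g (the sets of variables appearing in f and in g are disjoint). Then rank(M_{f·g}) = rank(M_f) · rank(M_g). -/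
open MvPolynomial

noncomputable section

/-! Let `U` and `V` be the `y`- and `z`-variables occurring in `f`. As `f` and `g` share no
variable, the coefficient of `y_S z_T` in `f * g` is the coefficient of `y_{S ∩ U} z_{T ∩ V}`
in `f` times that of `y_{S \ U} z_{T \ V}` in `g`, so `M_{fg}` is a submatrix of the Kronecker
product `M_f ⊗ M_g`. Conversely, the nonzero entries of `M_f ⊗ M_g` lie in rows `(S₁, S₂)`
with `S₁ ⊆ U`, `S₂ ∩ U = ∅` and in the analogous columns, and there they agree with the entry
of `M_{fg}` at `(S₁ ∪ S₂, T₁ ∪ T₂)`. Hence both matrices have the same rank, and the rank of a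
Kronecker product is the product of the ranks. -/

open Matrix Module TensorProduct
open scoped Kronecker

namespace Finset

variable {γ δ : Type*}

theorem union_inter_eq_left_of_disjoint [DecidableEq γ] {s t u : Finset γ} (hs : s ⊆ u)
    (ht : Disjoint t u) : (s ∪ t) ∩ u = s := by
  rw [union_inter_distrib_right, inter_eq_left.mpr hs, disjoint_iff_inter_eq_empty.mp ht,
    union_empty]

theorem union_sdiff_eq_right_of_subset [DecidableEq γ] {s t u : Finset γ} (hs : s ⊆ u)
    (ht : Disjoint t u) : (s ∪ t) \ u = t := by
  rw [union_sdiff_distrib, sdiff_eq_empty_iff_subset.mpr hs, sdiff_eq_self_of_disjoint ht,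
    empty_union]

theorem disjoint_disjSum_left {s : Finset γ} {t : Finset δ} {u : Finset (γ ⊕ δ)} :
    Disjoint (s.disjSum t) u ↔ Disjoint s u.toLeft ∧ Disjoint t u.toRight := by
  simp [disjoint_left]

theorem disjSum_inter [DecidableEq γ] [DecidableEq δ] (s : Finset γ) (t : Finset δ)
    (u : Finset (γ ⊕ δ)) : s.disjSum t ∩ u = (s ∩ u.toLeft).disjSum (t ∩ u.toRight) := by
  ext (x | x) <;> simp

theorem disjSum_sdiff [DecidableEq γ] [DecidableEq δ] (s : Finset γ) (t : Finset δ)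
    (u : Finset (γ ⊕ δ)) : s.disjSum t \ u = (s \ u.toLeft).disjSum (t \ u.toRight) := by
  ext (x | x) <;> simp

end Finset

theorem Finsupp.support_sum_single_one {σ : Type*} [DecidableEq σ] (u : Finset σ) :
    (∑ x ∈ u, Finsupp.single x 1).support = u := by
  ext x
  simp [Finsupp.finsetSum_apply, Finsupp.single_apply]

section Rank

variable {K : Type*} [Field K]

theorem LinearMap.finrank_range_tensorProduct_map {V W V' W' : Type*}
    [AddCommGroup V] [Module K V] [AddCommGroup W] [Module K W]
    [AddCommGroup V'] [Module K V'] [AddCommGroup W'] [Module K W']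
    [FiniteDimensional K V] [FiniteDimensional K W] (f : V →ₗ[K] V') (g : W →ₗ[K] W') :
    finrank K (range (TensorProduct.map f g)) = finrank K (range f) * finrank K (range g) := by
  have hfactor : TensorProduct.map f g =
      mapIncl (range f) (range g) ∘ₗ TensorProduct.map f.rangeRestrict g.rangeRestrict := by
    rw [mapIncl, ← TensorProduct.map_comp]
    rfl
  have hrange : range (TensorProduct.map f g) = range (mapIncl (range f) (range g)) := by
    rw [hfactor, range_comp_of_range_eq_top]
    exact range_eq_top.mpr
      (TensorProduct.map_surjective f.surjective_rangeRestrict g.surjective_rangeRestrict)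
  have hinj : Function.Injective (mapIncl (range f) (range g)) :=
    TensorProduct.map_injective_of_flat_flat _ _
      (Submodule.injective_subtype _) (Submodule.injective_subtype _)
  rw [hrange, finrank_range_of_inj hinj, finrank_tensorProduct]

theorem Matrix.rank_kronecker {m n p q : Type*} [Fintype m] [Fintype n] [Fintype p] [Fintype q]
    [DecidableEq n] [DecidableEq q] (A : Matrix m n K) (B : Matrix p q K) :
    (A ⊗ₖ B).rank = A.rank * B.rank := by
  rw [rank_eq_finrank_range_toLin _ ((Pi.basisFun K m).tensorProduct (Pi.basisFun K p))
      ((Pi.basisFun K n).tensorProduct (Pi.basisFun K q)),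
    toLin_kronecker, LinearMap.finrank_range_tensorProduct_map,
    rank_eq_finrank_range_toLin A (Pi.basisFun K m) (Pi.basisFun K n),
    rank_eq_finrank_range_toLin B (Pi.basisFun K p) (Pi.basisFun K q)]

theorem Matrix.rank_le_of_eq_submatrix_on_support {m n m' n' : Type*} [Fintype m] [Fintype n]
    [Fintype n'] {A : Matrix m n K} (N : Matrix m' n' K) (r : m → m') (c : n → n')
    (P : Set m) (Q : Set n) (hA : ∀ i j, A i j ≠ 0 → i ∈ P ∧ j ∈ Q)
    (hAN : ∀ i ∈ P, ∀ j ∈ Q, A i j = N (r i) (c j)) : A.rank ≤ N.rank := by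
  classical
  set DP := diagonal fun i => if i ∈ P then (1 : K) else 0
  set DQ := diagonal fun j => if j ∈ Q then (1 : K) else 0
  have hA_eq : A = DP * N.submatrix r c * DQ := by
    ext i j
    by_cases hij : i ∈ P ∧ j ∈ Q
    · simp [DP, DQ, diagonal_mul, mul_diagonal, hij.1, hij.2, hAN i hij.1 j hij.2]
    · rw [not_imp_comm.mp (hA i j) hij]
      rcases not_and_or.mp hij with hi | hj <;> simp [DP, DQ, diagonal_mul, mul_diagonal, *]
  calc A.rank ≤ (DP * N.submatrix r c).rank := hA_eq ▸ rank_mul_le_left _ _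
    _ ≤ (N.submatrix r c).rank := rank_mul_le_right _ _
    _ ≤ N.rank := rank_submatrix_le _ _ _

theorem Matrix.rank_eq_mul_of_apply_eq_inter_mul_sdiff {α β : Type*} [Fintype α] [Fintype β]
    [DecidableEq α] [DecidableEq β] {A B M : Matrix (Finset α) (Finset β) K}
    (U : Finset α) (V : Finset β) (hA : ∀ S T, A S T ≠ 0 → S ⊆ U ∧ T ⊆ V)
    (hB : ∀ S T, B S T ≠ 0 → Disjoint S U ∧ Disjoint T V)
    (hM : ∀ S T, M S T = A (S ∩ U) (T ∩ V) * B (S \ U) (T \ V)) :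
    M.rank = A.rank * B.rank := by
  rw [← rank_kronecker]
  apply le_antisymm
  · have hM_eq :
        M = (A ⊗ₖ B).submatrix (fun S => (S ∩ U, S \ U)) (fun T => (T ∩ V, T \ V)) := by
      ext S T
      exact hM S T
    exact hM_eq ▸ rank_submatrix_le _ _ _
  · refine rank_le_of_eq_submatrix_on_support M (fun p => p.1 ∪ p.2) (fun q => q.1 ∪ q.2)
      {p | p.1 ⊆ U ∧ Disjoint p.2 U} {q | q.1 ⊆ V ∧ Disjoint q.2 V} ?_ ?_
    · rintro ⟨S₁, S₂⟩ ⟨T₁, T₂⟩ hne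
      rw [kronecker_apply] at hne
      obtain ⟨hS₁, hT₁⟩ := hA _ _ (left_ne_zero_of_mul hne)
      obtain ⟨hS₂, hT₂⟩ := hB _ _ (right_ne_zero_of_mul hne)
      exact ⟨⟨hS₁, hS₂⟩, hT₁, hT₂⟩
    · rintro ⟨S₁, S₂⟩ ⟨hS₁, hS₂⟩ ⟨T₁, T₂⟩ ⟨hT₁, hT₂⟩
      rw [kronecker_apply, hM, Finset.union_inter_eq_left_of_disjoint hS₁ hS₂,
        Finset.union_sdiff_eq_right_of_subset hS₁ hS₂,
        Finset.union_inter_eq_left_of_disjoint hT₁ hT₂,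
        Finset.union_sdiff_eq_right_of_subset hT₁ hT₂]

end Rank

theorem MvPolynomial.coeff_add_mul_of_disjoint_vars {σ R : Type*} [DecidableEq σ] [CommSemiring R]
    {f g : MvPolynomial σ R} (hfg : Disjoint f.vars g.vars) {d₁ d₂ : σ →₀ ℕ}
    (hd₁ : d₁.support ⊆ f.vars) (hd₂ : Disjoint d₂.support f.vars) :
    coeff (d₁ + d₂) (f * g) = coeff d₁ f * coeff d₂ g := by
  rw [coeff_mul]
  refine Finset.sum_eq_single_of_mem (d₁, d₂)
    (Finset.HasAntidiagonal.mem_antidiagonal.mpr rfl) ?_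
  rintro ⟨e₁, e₂⟩ he hne
  by_contra hcoeff
  have he₁ :=
    support_subset_vars_of_mem_support (mem_support_iff.mpr (left_ne_zero_of_mul hcoeff))
  have he₂ :=
    support_subset_vars_of_mem_support (mem_support_iff.mpr (right_ne_zero_of_mul hcoeff))
  have hsum := Finset.HasAntidiagonal.mem_antidiagonal.mp he
  -- `e₁` and `d₁` live on `f.vars`, while `e₂` and `d₂` vanish there
  have h₁ : e₁ = d₁ := by
    ext x
    have hx := DFunLike.congr_fun hsum x
    simp only [Finsupp.add_apply] at hx
    by_cases hxf : x ∈ f.vars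
    · have : e₂ x = 0 := Finsupp.notMem_support_iff.mp fun h =>
        Finset.disjoint_left.mp hfg hxf (he₂ h)
      have : d₂ x = 0 := Finsupp.notMem_support_iff.mp fun h =>
        Finset.disjoint_left.mp hd₂ h hxf
      omega
    · rw [Finsupp.notMem_support_iff.mp fun h => hxf (he₁ h),
        Finsupp.notMem_support_iff.mp fun h => hxf (hd₁ h)]
  subst h₁
  exact hne (Prod.ext rfl (add_left_cancel hsum))

section PartialDerivativeMatrix

variable {K : Type*} [CommSemiring K] {h : ℕ}

theorem pdm_apply_eq_coeff (f : MvPolynomial (Fin h ⊕ Fin h) K) (S T : Finset (Fin h)) :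
    pdm f S T = f.coeff (∑ x ∈ S.disjSum T, Finsupp.single x 1) := by
  rw [Finset.sum_disjSum]
  rfl

theorem disjSum_subset_vars_of_pdm_ne_zero {f : MvPolynomial (Fin h ⊕ Fin h) K}
    {S T : Finset (Fin h)} (hne : pdm f S T ≠ 0) : S.disjSum T ⊆ f.vars := by
  classical
  rw [pdm_apply_eq_coeff] at hne
  simpa only [Finsupp.support_sum_single_one] using
    support_subset_vars_of_mem_support (mem_support_iff.mpr hne)

theorem pdm_mul_apply_of_disjoint_vars {f g : MvPolynomial (Fin h ⊕ Fin h) K}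
    (hfg : Disjoint f.vars g.vars) (S T : Finset (Fin h)) :
    pdm (f * g) S T = pdm f (S ∩ f.vars.toLeft) (T ∩ f.vars.toRight) *
      pdm g (S \ f.vars.toLeft) (T \ f.vars.toRight) := by
  classical
  rw [pdm_apply_eq_coeff, pdm_apply_eq_coeff, pdm_apply_eq_coeff, ← Finset.disjSum_inter,
    ← Finset.disjSum_sdiff, ← Finset.sum_inter_add_sum_sdiff _ f.vars]
  apply coeff_add_mul_of_disjoint_vars hfg
  · rw [Finsupp.support_sum_single_one]
    exact Finset.inter_subset_right
  · rw [Finsupp.support_sum_single_one]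
    exact Finset.sdiff_disjoint

end PartialDerivativeMatrix

theorem pdm_rank_mul_general {K : Type} [Field K] {h : ℕ}
    (f g : MvPolynomial (Fin h ⊕ Fin h) K)
    (hdisj : Disjoint f.vars g.vars) :
    (pdm (f * g)).rank = (pdm f).rank * (pdm g).rank :=
  Matrix.rank_eq_mul_of_apply_eq_inter_mul_sdiff f.vars.toLeft f.vars.toRight
    (fun _ _ hne => Finset.disjSum_subset.mp (disjSum_subset_vars_of_pdm_ne_zero hne))
    (fun _ _ hne => Finset.disjoint_disjSum_left.mp
      (hdisj.symm.mono_left (disjSum_subset_vars_of_pdm_ne_zero hne)))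
    (pdm_mul_apply_of_disjoint_vars hdisj)

/-- Multiplicativity of the rank of the partial derivative matrix for
variable-disjoint multilinear polynomials. -/
theorem pdm_rank_mul {K : Type} [Field K] {h : ℕ}
    (f g : MvPolynomial (Fin h ⊕ Fin h) K) (hf : MLin f) (hg : MLin g)
    (hdisj : Disjoint f.vars g.vars) :
    (pdm (f * g)).rank = (pdm f).rank * (pdm g).rank :=
  pdm_rank_mul_general f g hdisj

end
end

section
/- There is a constant C > 0 such that for all positive integers S, M_1, M_2 with 1 ≤ M_1 ≤ 2S/3 and S/4 ≤ M_2 ≤ 3S/4 the following holds: if A ⊆ [S] is a fixed set with |A| = M_1 and T is a uniformly random subset of [S] of size M_2, then for every integer a with 0 ≤ a ≤ M_1, Pr[|T ∩ A| = a] ≤ C·M_1^{−1/2}. Equivalently, binom(M_1, a)·binom(S − M_1, M_2 − a) / binom(S, M_2) ≤ C·M_1^{−1/2} for every 0 ≤ a ≤ M_1. -/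
open MvPolynomial

noncomputable section

/-! The number of `k`-subsets of an `(m + n)`-set meeting a fixed `m`-set in `b` points is
`w b = C(m, b) C(n, k - b)`, and these weights sum to `C(m + n, k)`. At a mode `x` of `w`,
comparing `w x` with `w (x ± 1)` shows that the four cells `x, m - x, k - x, n + x - k` of the
contingency table are all at least `m / 10` in the balanced regime. Hence the ratio
`w (b + 1) / w b = (m - b) (k - b) / ((b + 1) (n + 1 + b - k))` is at most `(1 + 20 L / m) ^ 4`
for `x - L ≤ b < x`, so for `L ≈ √m / 9` every weight in the window `[x - L, x]` is at least
`w x / e`, and `(L + 1) w x ≤ e C(m + n, k)`. -/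

open Finset

lemma cast_choose_succ_mul {R : Type*} [Ring R] (m b : ℕ) :
    (m.choose (b + 1) : R) * (b + 1) = m.choose b * (m - b) := by
  rcases le_or_gt b m with h | h
  · simpa [Nat.cast_sub h] using congrArg (Nat.cast : ℕ → R) (Nat.choose_succ_right_eq m b)
  · simp [Nat.choose_eq_zero_of_lt h, Nat.choose_eq_zero_of_lt (h.trans b.lt_succ_self)]

lemma le_of_mul_eq_mul_of_le {w w' p q : ℝ} (hw : 0 < w) (hq : 0 ≤ q) (hle : w' ≤ w)
    (h : w' * q = w * p) : p ≤ q :=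
  le_of_mul_le_mul_left (h ▸ mul_le_mul_of_nonneg_right hle hq) hw

lemma le_one_add_mul_of_le_add {K m c d L : ℝ} (hm : 0 < m) (hL : 0 ≤ L) (hc : m ≤ K * c)
    (hd : d ≤ c + L) : d ≤ (1 + K * L / m) * c := by
  have : L ≤ K * L / m * c := by
    rw [div_mul_eq_mul_div, le_div_iff₀ hm]; nlinarith
  linarith

lemma one_add_pow_le_exp_mul {s : ℝ} (hs : -1 ≤ s) (n : ℕ) :
    (1 + s) ^ n ≤ Real.exp (n * s) := by
  rw [Real.exp_nat_mul]
  exact pow_le_pow_left₀ (by linarith) (by linarith [Real.add_one_le_exp s]) n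

lemma one_add_div_pow_pow_le_exp_one {m : ℝ} {L i : ℕ} (hm : 0 < m) (hL : 80 * (L : ℝ) ^ 2 ≤ m)
    (hi : i ≤ L) : ((1 + 20 * L / m) ^ 4) ^ i ≤ Real.exp 1 := by
  have hs : (0 : ℝ) ≤ 20 * L / m := by positivity
  calc ((1 + 20 * (L : ℝ) / m) ^ 4) ^ i ≤ ((1 + 20 * (L : ℝ) / m) ^ 4) ^ L :=
        pow_le_pow_right₀ (one_le_pow₀ (by linarith)) hi
    _ = (1 + 20 * L / m) ^ (4 * L) := (pow_mul _ _ _).symm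
    _ ≤ Real.exp ((4 * L : ℕ) * (20 * L / m)) := one_add_pow_le_exp_mul (by linarith) _
    _ ≤ Real.exp 1 := by
      rw [Real.exp_le_exp, Nat.cast_mul, ← mul_div_assoc, div_le_one hm]
      push_cast
      linarith

lemma le_pow_mul_sub_of_succ_le {w : ℕ → ℝ} {r : ℝ} (hr : 0 ≤ r) {x L : ℕ}
    (h : ∀ b, x ≤ b + L → b < x → w (b + 1) ≤ r * w b) {i : ℕ} (hi : i ≤ L) (hix : i ≤ x) :
    w x ≤ r ^ i * w (x - i) := by
  induction i with
  | zero => simp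
  | succ i ih =>
    have hs := h (x - (i + 1)) (by omega) (by omega)
    rw [show x - (i + 1) + 1 = x - i by omega] at hs
    calc w x ≤ r ^ i * w (x - i) := ih (by omega) (by omega)
      _ ≤ r ^ i * (r * w (x - (i + 1))) := mul_le_mul_of_nonneg_left hs (pow_nonneg hr i)
      _ = r ^ (i + 1) * w (x - (i + 1)) := by ring

lemma succ_mul_le_sum_Icc {w : ℕ → ℝ} {c : ℝ} {x L : ℕ} (hL : L ≤ x)
    (h : ∀ i ≤ L, w x ≤ c * w (x - i)) : (L + 1) * w x ≤ c * ∑ b ∈ Icc (x - L) x, w b := by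
  have := card_nsmul_le_sum (Icc (x - L) x) (fun b => c * w b) (w x) fun b hb => by
    obtain ⟨hb₁, hb₂⟩ := mem_Icc.1 hb
    simpa [show x - (x - b) = b by omega] using h (x - b) (by omega)
  rwa [Nat.card_Icc, show x + 1 - (x - L) = L + 1 by omega, nsmul_eq_mul, ← mul_sum,
    Nat.cast_add, Nat.cast_one] at this

lemma mode_cells_ge {m n k x : ℝ} (hm : 400 ≤ m) (hmn : m ≤ 2 * n) (hk : m + n ≤ 4 * k)
    (hk' : 4 * k ≤ 3 * (m + n))
    (hI : (m - x) * (k - x) ≤ (x + 1) * (n + 1 + x - k))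
    (hII : x * (n + x - k) ≤ (m - x + 1) * (k - x + 1)) :
    m ≤ 10 * x ∧ m ≤ 10 * (m - x) ∧ m ≤ 10 * (k - x) ∧ m ≤ 10 * (n + x - k) := by
  have hlow : m * k ≤ x * (m + n + 2) + n + 1 - k := by linarith
  have hup : x * (m + n + 2) ≤ (m + 1) * (k + 1) := by linarith
  have hS : 0 < m + n + 2 := by linarith
  refine ⟨?_, ?_, ?_, ?_⟩ <;> refine le_of_mul_le_mul_right ?_ hS <;> nlinarith

/-- For `b > k` the truncated subtraction would give the junk value `C(m, b)`; setting it to `0`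
makes `succ_mul` hold for every `b`. -/
def hypergeomWeight (m n k b : ℕ) : ℝ :=
  if b ≤ k then m.choose b * n.choose (k - b) else 0

namespace hypergeomWeight

variable {m n k : ℕ}

lemma nonneg (b : ℕ) : 0 ≤ hypergeomWeight m n k b := by
  unfold hypergeomWeight; split_ifs <;> positivity

lemma eq_zero_of_lt {b : ℕ} (h : k < b) : hypergeomWeight m n k b = 0 :=
  if_neg h.not_ge

lemma succ_mul (b : ℕ) :
    hypergeomWeight m n k (b + 1) * ((b + 1) * (n + 1 + b - k)) =
      hypergeomWeight m n k b * ((m - b) * (k - b)) := by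
  rcases lt_or_ge b k with hb | hb
  · obtain ⟨j, rfl⟩ : ∃ j, k = b + 1 + j := ⟨k - (b + 1), by omega⟩
    have hj : b + 1 + j - b = j + 1 := by omega
    simp only [hypergeomWeight, if_pos hb.le, if_pos (Nat.le_add_right (b + 1) j), hj,
      Nat.add_sub_cancel_left]
    push_cast
    calc (m.choose (b + 1) : ℝ) * n.choose j * ((b + 1) * (n + 1 + b - (b + 1 + j)))
        = (m.choose (b + 1) * (b + 1)) * (n.choose j * (n - j)) := by ring
      _ = (m.choose b * (m - b)) * (n.choose (j + 1) * (j + 1)) := by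
        rw [cast_choose_succ_mul, cast_choose_succ_mul]
      _ = m.choose b * n.choose (j + 1) * ((m - b) * (b + 1 + j - b)) := by ring
  · rw [eq_zero_of_lt (Nat.lt_succ_of_le hb), zero_mul]
    rcases hb.lt_or_eq with hb | rfl
    · rw [eq_zero_of_lt hb, zero_mul]
    · simp

lemma sum_range (m n k : ℕ) :
    ∑ b ∈ range (k + 1), hypergeomWeight m n k b = (m + n).choose k := by
  rw [Nat.add_choose_eq, Nat.sum_antidiagonal_eq_sum_range_succ_mk]
  push_cast
  exact sum_congr rfl fun b hb => if_pos (Nat.lt_succ_iff.1 (mem_range.1 hb))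

lemma le_and_le_of_pos {b : ℕ} (h : 0 < hypergeomWeight m n k b) :
    b ≤ m ∧ b ≤ k ∧ k ≤ n + b := by
  unfold hypergeomWeight at h
  split_ifs at h with hbk
  · refine ⟨?_, hbk, ?_⟩ <;> by_contra! hlt
    · simp [Nat.choose_eq_zero_of_lt hlt] at h
    · simp [Nat.choose_eq_zero_of_lt (by omega : n < k - b)] at h
  · exact absurd h (lt_irrefl 0)

lemma exists_max (m n k : ℕ) :
    ∃ x, ∀ b, hypergeomWeight m n k b ≤ hypergeomWeight m n k x := by
  obtain ⟨x, -, hx⟩ :=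
    (range (k + 1)).exists_max_image (hypergeomWeight m n k) nonempty_range_add_one
  refine ⟨x, fun b => ?_⟩
  rcases le_or_gt b k with hb | hb
  · exact hx b (mem_range.2 (Nat.lt_succ_of_le hb))
  · exact (eq_zero_of_lt hb).trans_le (nonneg x)

lemma mode_ineqs {x : ℕ} (hx : ∀ b, hypergeomWeight m n k b ≤ hypergeomWeight m n k x)
    (hpos : 0 < hypergeomWeight m n k x) :
    ((m : ℝ) - x) * (k - x) ≤ (x + 1) * (n + 1 + x - k) ∧
      (x : ℝ) * (n + x - k) ≤ (m - x + 1) * (k - x + 1) := by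
  obtain ⟨hxm, hxk, hkn⟩ := le_and_le_of_pos hpos
  have hkn' : (k : ℝ) ≤ n + x := by exact_mod_cast hkn
  refine ⟨le_of_mul_eq_mul_of_le hpos (mul_nonneg (by positivity) (by linarith)) (hx _)
    (succ_mul x), ?_⟩
  rcases Nat.eq_zero_or_pos x with rfl | hx0
  · simp only [CharP.cast_eq_zero, zero_mul, sub_zero]; positivity
  · obtain ⟨y, rfl⟩ : ∃ y, x = y + 1 := ⟨x - 1, by omega⟩
    have hxm' : (y : ℝ) + 1 ≤ m := by exact_mod_cast hxm
    have hxk' : (y : ℝ) + 1 ≤ k := by exact_mod_cast hxk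
    have := le_of_mul_eq_mul_of_le hpos (by nlinarith) (hx y) (succ_mul y).symm
    push_cast
    convert this using 1 <;> ring

lemma succ_le_of_mode (hm : 400 ≤ m) (hmn : m ≤ 2 * n) (hk : m + n ≤ 4 * k)
    (hk' : 4 * k ≤ 3 * (m + n)) {x : ℕ}
    (hx : ∀ b, hypergeomWeight m n k b ≤ hypergeomWeight m n k x)
    (hpos : 0 < hypergeomWeight m n k x) {L b : ℕ} (hL : 20 * L ≤ m) (hbL : x ≤ b + L)
    (hbx : b < x) :
    hypergeomWeight m n k (b + 1) ≤ (1 + 20 * L / m) ^ 4 * hypergeomWeight m n k b := by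
  obtain ⟨hI, hII⟩ := mode_ineqs hx hpos
  obtain ⟨c₁, c₂, c₃, c₄⟩ := mode_cells_ge (by exact_mod_cast hm) (by exact_mod_cast hmn)
    (by exact_mod_cast hk) (by exact_mod_cast hk') hI hII
  have hm₀ : (0 : ℝ) < m := by positivity
  have hL' : 20 * (L : ℝ) ≤ m := by exact_mod_cast hL
  have hbL' : (x : ℝ) ≤ b + L := by exact_mod_cast hbL
  have hbx' : (b : ℝ) + 1 ≤ x := by exact_mod_cast hbx
  set t := 1 + 20 * (L : ℝ) / m
  have ht : 0 ≤ t := by positivity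
  have grow {c d : ℝ} (hc : m ≤ 20 * c) (hd : d ≤ c + L) : d ≤ t * c :=
    le_one_add_mul_of_le_add hm₀ (Nat.cast_nonneg L) hc hd
  have e₁ : (m : ℝ) - b ≤ t * (m - x) := grow (by linarith) (by linarith)
  have e₂ : (k : ℝ) - b ≤ t * (k - x) := grow (by linarith) (by linarith)
  have e₃ : (x : ℝ) + 1 ≤ t * (b + 1) := grow (by linarith) (by linarith)
  have e₄ : (n : ℝ) + 1 + x - k ≤ t * (n + 1 + b - k) := grow (by linarith) (by linarith)
  have hQ : (0 : ℝ) < (b + 1) * (n + 1 + b - k) := by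
    apply mul_pos <;> linarith
  have hP : ((m : ℝ) - b) * (k - b) ≤ t ^ 4 * ((b + 1) * (n + 1 + b - k)) :=
    calc ((m : ℝ) - b) * (k - b)
        ≤ (t * (m - x)) * (t * (k - x)) :=
          mul_le_mul e₁ e₂ (by linarith) (mul_nonneg ht (by linarith))
      _ = t ^ 2 * ((m - x) * (k - x)) := by ring
      _ ≤ t ^ 2 * ((x + 1) * (n + 1 + x - k)) := by gcongr
      _ ≤ t ^ 2 * ((t * (b + 1)) * (t * (n + 1 + b - k))) :=
          mul_le_mul_of_nonneg_left
            (mul_le_mul e₃ e₄ (by linarith) (mul_nonneg ht (by linarith))) (sq_nonneg t)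
      _ = t ^ 4 * ((b + 1) * (n + 1 + b - k)) := by ring
  refine le_of_mul_le_mul_right ?_ hQ
  rw [succ_mul]
  calc hypergeomWeight m n k b * ((m - b) * (k - b))
      ≤ hypergeomWeight m n k b * (t ^ 4 * ((b + 1) * (n + 1 + b - k))) :=
        mul_le_mul_of_nonneg_left hP (nonneg b)
    _ = t ^ 4 * hypergeomWeight m n k b * ((b + 1) * (n + 1 + b - k)) := by ring

lemma succ_mul_le_choose (hm : 400 ≤ m) (hmn : m ≤ 2 * n) (hk : m + n ≤ 4 * k)
    (hk' : 4 * k ≤ 3 * (m + n)) {L : ℕ} (hL : 81 * L ^ 2 ≤ m) (a : ℕ) :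
    (L + 1) * hypergeomWeight m n k a ≤ Real.exp 1 * (m + n).choose k := by
  obtain ⟨x, hx⟩ := exists_max m n k
  rcases (nonneg x).eq_or_lt with h0 | hpos
  · rw [le_antisymm (h0 ▸ hx a) (nonneg a), mul_zero]
    positivity
  obtain ⟨hI, hII⟩ := mode_ineqs hx hpos
  obtain ⟨c₁, -⟩ := mode_cells_ge (by exact_mod_cast hm) (by exact_mod_cast hmn)
    (by exact_mod_cast hk) (by exact_mod_cast hk') hI hII
  have hL₂₀ : 20 * L ≤ m := by nlinarith
  have hLx : L ≤ x := by
    have : (20 * L : ℝ) ≤ m := by exact_mod_cast hL₂₀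
    exact_mod_cast (show (L : ℝ) ≤ x by linarith)
  have hL₈₀ : 80 * (L : ℝ) ^ 2 ≤ m := by exact_mod_cast (by linarith : 80 * L ^ 2 ≤ m)
  have hwindow : ∀ i ≤ L,
      hypergeomWeight m n k x ≤ Real.exp 1 * hypergeomWeight m n k (x - i) := fun i hi =>
    calc hypergeomWeight m n k x
        ≤ ((1 + 20 * (L : ℝ) / m) ^ 4) ^ i * hypergeomWeight m n k (x - i) :=
          le_pow_mul_sub_of_succ_le (by positivity)
            (fun b hbL hbx => succ_le_of_mode hm hmn hk hk' hx hpos hL₂₀ hbL hbx) hi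
            (hi.trans hLx)
      _ ≤ Real.exp 1 * hypergeomWeight m n k (x - i) :=
          mul_le_mul_of_nonneg_right
            (one_add_div_pow_pow_le_exp_one (by positivity) hL₈₀ hi) (nonneg _)
  have hxk : x ≤ k := (le_and_le_of_pos hpos).2.1
  calc (L + 1) * hypergeomWeight m n k a ≤ (L + 1) * hypergeomWeight m n k x := by
        gcongr; exact hx a
    _ ≤ Real.exp 1 * ∑ b ∈ Icc (x - L) x, hypergeomWeight m n k b :=
        succ_mul_le_sum_Icc hLx hwindow
    _ ≤ Real.exp 1 * ∑ b ∈ range (k + 1), hypergeomWeight m n k b := by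
      refine mul_le_mul_of_nonneg_left ?_ (Real.exp_pos 1).le
      refine sum_le_sum_of_subset_of_nonneg (fun b hb => ?_) fun b _ _ => nonneg b
      exact mem_range.2 (Nat.lt_succ_of_le ((mem_Icc.1 hb).2.trans hxk))
    _ = Real.exp 1 * (m + n).choose k := by rw [sum_range]

lemma mul_sqrt_le_choose (hm : 400 ≤ m) (hmn : m ≤ 2 * n) (hk : m + n ≤ 4 * k)
    (hk' : 4 * k ≤ 3 * (m + n)) (a : ℕ) :
    hypergeomWeight m n k a * √m ≤ 25 * (m + n).choose k := by
  set L := Nat.sqrt m / 9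
  have h9L : 9 * L ≤ Nat.sqrt m := Nat.mul_div_le _ _
  have hL : 81 * L ^ 2 ≤ m := by nlinarith [Nat.sqrt_le' m]
  have hsqrt : √(m : ℝ) ≤ 9 * (L + 1) := by
    have : Nat.sqrt m + 1 ≤ 9 * (L + 1) := by omega
    exact Real.real_sqrt_lt_nat_sqrt_succ.le.trans (by exact_mod_cast this)
  calc hypergeomWeight m n k a * √m ≤ hypergeomWeight m n k a * (9 * (L + 1)) :=
        mul_le_mul_of_nonneg_left hsqrt (nonneg a)
    _ = 9 * ((L + 1) * hypergeomWeight m n k a) := by ring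
    _ ≤ 9 * (Real.exp 1 * (m + n).choose k) :=
        mul_le_mul_of_nonneg_left (succ_mul_le_choose hm hmn hk hk' hL a) (by norm_num)
    _ ≤ 25 * (m + n).choose k := by
        rw [← mul_assoc]
        gcongr
        linarith [Real.exp_one_lt_d9]

end hypergeomWeight

lemma card_filter_card_inter_le {α : Type*} [Fintype α] [DecidableEq α] (A : Finset α)
    (k a : ℕ) :
    (univ.filter fun T : {T : Finset α // T.card = k} => (T.1 ∩ A).card = a).card ≤
      A.card.choose a * (Fintype.card α - A.card).choose (k - a) := by
  rw [← card_compl, ← card_powersetCard, ← card_powersetCard, ← card_product]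
  refine card_le_card_of_injOn (fun T => (T.1 ∩ A, T.1 \ A)) (fun T hT => ?_) ?_
  · have hTa : (T.1 ∩ A).card = a := (mem_filter.1 hT).2
    have hsplit := card_inter_add_card_sdiff T.1 A
    rw [T.2, hTa] at hsplit
    simp only [coe_product, Set.mem_prod, mem_coe, mem_powersetCard]
    exact ⟨⟨inter_subset_right, hTa⟩, ⟨fun y hy => mem_compl.2 (mem_sdiff.1 hy).2, by omega⟩⟩
  · intro T _ U _ hTU
    simp only [Prod.mk.injEq] at hTU
    exact Subtype.ext (by rw [← sdiff_union_inter T.1 A, ← sdiff_union_inter U.1 A, hTU.1, hTU.2])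

lemma unifProb_le_one {Ω : Type*} [Fintype Ω] (p : Ω → Prop) : unifProb p ≤ 1 := by
  unfold unifProb
  exact div_le_one_of_le₀ (by exact_mod_cast card_le_univ _) (Nat.cast_nonneg _)

lemma unifProb_card_inter_eq_le {α : Type*} [Fintype α] [DecidableEq α] (A : Finset α)
    (k a : ℕ) :
    unifProb (fun T : {T : Finset α // T.card = k} => (T.1 ∩ A).card = a) ≤
      hypergeomWeight A.card (Fintype.card α - A.card) k a / (Fintype.card α).choose k := by
  rw [unifProb, Fintype.card_finset_len, filter_congr_decidable]
  gcongr
  unfold hypergeomWeight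
  split_ifs with hak
  · exact_mod_cast card_filter_card_inter_le A k a
  · rw [Nat.cast_eq_zero.2 (card_eq_zero.2 (filter_eq_empty_iff.2 fun T _ => ?_))]
    exact ((card_le_card inter_subset_left).trans_eq T.2).trans_lt (not_le.1 hak) |>.ne

/-- Hypergeometric anticoncentration, part 2. -/
theorem hypergeometric_anticoncentration_two :
    ∃ C : ℝ, 0 < C ∧ ∀ (S M₁ M₂ : ℕ), 0 < S → 0 < M₁ → 0 < M₂ →
      (M₁ : ℝ) ≤ 2*(S : ℝ)/3 →
      (S : ℝ)/4 ≤ (M₂ : ℝ) → (M₂ : ℝ) ≤ 3*(S : ℝ)/4 →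
      ∀ A : Finset (Fin S), A.card = M₁ → ∀ a : ℕ, a ≤ M₁ →
        unifProb (fun T : {T : Finset (Fin S) // T.card = M₂} =>
            (T.1 ∩ A).card = a) ≤ C * (M₁ : ℝ) ^ (-(1 : ℝ)/2) := by
  refine ⟨25, by norm_num, fun S M₁ M₂ _ hM₁ _ h₁ h₂ h₃ A hA a _ => ?_⟩
  obtain ⟨n, rfl⟩ := Nat.exists_eq_add_of_le
    (show M₁ ≤ S by exact_mod_cast (by linarith : (M₁ : ℝ) ≤ S))
  have hsqrt : 0 < √(M₁ : ℝ) := Real.sqrt_pos.2 (by exact_mod_cast hM₁)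
  rw [neg_div, Real.rpow_neg (Nat.cast_nonneg _), ← Real.sqrt_eq_rpow, ← div_eq_mul_inv]
  by_cases hm : 400 ≤ M₁
  · push_cast at h₁ h₂ h₃
    have hmn : M₁ ≤ 2 * n := by exact_mod_cast (by linarith : (M₁ : ℝ) ≤ 2 * n)
    have hk : M₁ + n ≤ 4 * M₂ := by exact_mod_cast (by linarith : (M₁ + n : ℝ) ≤ 4 * M₂)
    have hk' : 4 * M₂ ≤ 3 * (M₁ + n) := by
      exact_mod_cast (by linarith : (4 * M₂ : ℝ) ≤ 3 * (M₁ + n))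
    have hchoose : (0 : ℝ) < (M₁ + n).choose M₂ := by exact_mod_cast Nat.choose_pos (by omega)
    have hprob := unifProb_card_inter_eq_le A M₂ a
    rw [hA, Fintype.card_fin, Nat.add_sub_cancel_left] at hprob
    exact hprob.trans ((div_le_div_iff₀ hchoose hsqrt).2
      (hypergeomWeight.mul_sqrt_le_choose hm hmn hk hk' a))
  · refine (unifProb_le_one _).trans ((le_div_iff₀ hsqrt).2 ?_)
    rw [one_mul, Real.sqrt_le_left (by norm_num)]
    exact_mod_cast (by omega : M₁ ≤ 25 ^ 2)

end
end
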